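/- Let a, b be nonzero complex numbers with |ab| < 1 and let i denote the imaginary unit. Then f(ia, ib) = (1/2)·(1 + i)·f(a,b) + (1/2)·(1 − i)·f(−a,−b). -/

import Mathlib

/-!
Since the two triangular exponents of the `n`-th term add up to `n²`, scaling both arguments of
`f` by a nonzero `c` multiplies that term by `c ^ n²`. The identity therefore holds term by term:
`i ^ n²` is `1` for even `n` and `i` for odd `n`, which is exactly
`(1 + i) / 2 + (1 - i) / 2 · (-1) ^ n²`. The corresponding terms of the three series have equal
moduli, so the series converge or diverge together.
-/

/-- Ramanujan's theta function `f(a,b) = ∑_{n ∈ ℤ} a^(n(n+1)/2) * b^(n(n-1)/2)`. -/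
noncomputable def ramanujanTheta (a b : ℂ) : ℂ :=
  ∑' n : ℤ, a ^ (n * (n + 1) / 2) * b ^ (n * (n - 1) / 2)

open Complex

lemma Int.mul_succ_div_two_add_mul_pred_div_two (n : ℤ) :
    n * (n + 1) / 2 + n * (n - 1) / 2 = n * n := by
  have hsucc := (Int.even_mul_succ_self n).two_dvd
  have hsum : n * (n + 1) + n * (n - 1) = 2 * (n * n) := by ring
  omega

lemma Complex.I_zpow_mul_self (n : ℤ) :
    I ^ (n * n) = 1 / 2 * (1 + I) + 1 / 2 * (1 - I) * (-1) ^ (n * n) := by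
  rcases Int.even_or_odd n with hn | hn
  · have h4 : n * n % 4 = 0 := by
      obtain ⟨t, rfl⟩ := hn
      rw [show (t + t) * (t + t) = 4 * (t * t) by ring]
      omega
    rw [I_zpow_eq_zpow_mod, h4, (hn.mul_right n).neg_one_zpow, zpow_zero]
    ring
  · have h4 : n * n % 4 = 1 := by
      obtain ⟨t, rfl⟩ := hn
      rw [show (2 * t + 1) * (2 * t + 1) = 4 * (t * t + t) + 1 by ring]
      omega
    rw [I_zpow_eq_zpow_mod, h4, (hn.mul hn).neg_one_zpow, zpow_one]
    ring

noncomputable def ramanujanThetaTerm (a b : ℂ) (n : ℤ) : ℂ :=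
  a ^ (n * (n + 1) / 2) * b ^ (n * (n - 1) / 2)

lemma ramanujanTheta_eq_tsum (a b : ℂ) :
    ramanujanTheta a b = ∑' n, ramanujanThetaTerm a b n := rfl

lemma ramanujanThetaTerm_mul_mul {c : ℂ} (hc : c ≠ 0) (a b : ℂ) (n : ℤ) :
    ramanujanThetaTerm (c * a) (c * b) n = c ^ (n * n) * ramanujanThetaTerm a b n := by
  rw [ramanujanThetaTerm, ramanujanThetaTerm, mul_zpow, mul_zpow,
    ← Int.mul_succ_div_two_add_mul_pred_div_two n, zpow_add₀ hc]
  ring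

lemma norm_ramanujanThetaTerm_mul_mul {c : ℂ} (hc : ‖c‖ = 1) (a b : ℂ) (n : ℤ) :
    ‖ramanujanThetaTerm (c * a) (c * b) n‖ = ‖ramanujanThetaTerm a b n‖ := by
  rw [ramanujanThetaTerm_mul_mul (norm_ne_zero_iff.1 (hc ▸ one_ne_zero)), norm_mul, norm_zpow, hc,
    one_zpow, one_mul]

lemma summable_iff_of_norm_eq {ι E : Type*} [NormedAddCommGroup E] [NormedSpace ℝ E]
    [FiniteDimensional ℝ E] {f g : ι → E} (h : ∀ i, ‖f i‖ = ‖g i‖) :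
    Summable f ↔ Summable g := by
  rw [← summable_norm_iff, ← summable_norm_iff (f := g), funext h]

lemma tsum_eq_linear_combination_of_norm_eq {ι : Type*} {f g h : ι → ℂ} (c d : ℂ)
    (hfgh : ∀ i, h i = c * f i + d * g i) (hg : ∀ i, ‖g i‖ = ‖f i‖) (hh : ∀ i, ‖h i‖ = ‖f i‖) :
    ∑' i, h i = c * ∑' i, f i + d * ∑' i, g i := by
  by_cases hf : Summable f
  · rw [tsum_congr hfgh, (hf.mul_left c).tsum_add (((summable_iff_of_norm_eq hg).2 hf).mul_left d),
      tsum_mul_left, tsum_mul_left]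
  · rw [tsum_eq_zero_of_not_summable hf,
      tsum_eq_zero_of_not_summable (mt (summable_iff_of_norm_eq hg).1 hf),
      tsum_eq_zero_of_not_summable (mt (summable_iff_of_norm_eq hh).1 hf)]
    ring

theorem theta_quartic_compact_general (a b : ℂ) :
    ramanujanTheta (Complex.I * a) (Complex.I * b) =
      (1 / 2) * (1 + Complex.I) * ramanujanTheta a b +
        (1 / 2) * (1 - Complex.I) * ramanujanTheta (-a) (-b) := by
  simp only [ramanujanTheta_eq_tsum, neg_eq_neg_one_mul a, neg_eq_neg_one_mul b]
  refine tsum_eq_linear_combination_of_norm_eq _ _ (fun n => ?_)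
    (norm_ramanujanThetaTerm_mul_mul (by simp) a b) (norm_ramanujanThetaTerm_mul_mul (by simp) a b)
  rw [ramanujanThetaTerm_mul_mul I_ne_zero, ramanujanThetaTerm_mul_mul (by norm_num),
    I_zpow_mul_self]
  ring

theorem theta_quartic_compact (a b : ℂ) (ha : a ≠ 0) (hb : b ≠ 0)
    (hab : ‖a * b‖ < 1) :
    ramanujanTheta (Complex.I * a) (Complex.I * b) =
      (1 / 2) * (1 + Complex.I) * ramanujanTheta a b +
        (1 / 2) * (1 - Complex.I) * ramanujanTheta (-a) (-b) :=
  theta_quartic_compact_general a b
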